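/- Let k ≥ 2 be an integer, let x : ℕ → A be a sequence over a finite alphabet A whose k-kernel is finite, and let α be irrational with 0 < α < 1. Define the characteristic Sturmian sequence a : ℕ → ℕ by a(n) = 1 if the fractional part {(n+1)α} < α and a(n) = 0 otherwise. Then there exists a constant C such that any common factor of x and a has length at most C; that is, if x(i+t) = a(j+t) for all 0 ≤ t < L for some indices i, j, then L ≤ C. -/

import Mathlib

/-!
If `x` has a finite `k`-kernel `K`, the aligned block of `x` at `[b kʳ, (b + 1) kʳ)` is read off the
vector `(g b)_{g ∈ K}`, so for every `r` at most `D` distinct aligned blocks of length `kʳ` occur,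
with `D` independent of `r`.

The Sturmian factor of length `n` at position `q` is the coding of `θ = {(q + 1)α}` by the arcs
`[{-sα}, {-sα} + α)`, `s < n`, so two points `θ < θ'` with a point `{-tα}`, `t < n`, in `(θ, θ']`
carry different factors. As `nα` is irrational, the points `θ` belonging to the positions
`P, P + n, P + 2n, …` enter every interval of a fixed length `ρ` within a bounded number `M` of
steps, uniformly in `P`; hence `M` consecutive aligned positions carry at least `n - 1` distinct
factors. A common factor of length `(M + 2) n` contains `M` consecutive aligned blocks of `x`,
which is impossible once `n = k ^ (D + 2) > D + 1`.
-/

open Set Filter Topology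

noncomputable def charSturmian (α : ℝ) (n : ℕ) : ℕ :=
  if Int.fract (((n : ℝ) + 1) * α) < α then 1 else 0

def kKernel {A : Type*} (k : ℕ) (x : ℕ → A) : Set (ℕ → A) :=
  {g | ∃ r s : ℕ, s < k ^ r ∧ g = fun n => x (n * k ^ r + s)}

section Fract

variable {R : Type*} [CommRing R] [LinearOrder R] [IsStrictOrderedRing R] [FloorRing R]

lemma Int.fract_fract_add (a b : R) : Int.fract (Int.fract a + b) = Int.fract (a + b) :=
  Int.fract_eq_fract.2 ⟨-⌊a⌋, by rw [Int.fract]; push_cast; ring⟩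

lemma Int.fract_sub_fract (a b : R) : Int.fract (a - Int.fract b) = Int.fract (a - b) :=
  Int.fract_eq_fract.2 ⟨⌊b⌋, by rw [Int.fract]; ring⟩

lemma Int.fract_sub_lt_iff_of_mem_Ico {α θ A : R} (hθ : θ ∈ Ico 0 1) (hA : A ∈ Ico 0 1) :
    Int.fract (θ - A) < α ↔ A ≤ θ ∧ θ < A + α ∨ θ < A + α - 1 := by
  obtain ⟨hθ0, hθ1⟩ := hθ
  obtain ⟨hA0, hA1⟩ := hA
  by_cases hAθ : A ≤ θ
  · rw [Int.fract_eq_self.2 ⟨sub_nonneg.2 hAθ, by linarith⟩]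
    grind
  · rw [← Int.fract_add_one, Int.fract_eq_self.2 ⟨by linarith, by linarith⟩]
    grind

end Fract

lemma Finset.exists_pos_le_dist {X : Type*} [MetricSpace X] (S : Finset X) :
    ∃ ρ > 0, ∀ p ∈ S, ∀ q ∈ S, p ≠ q → ρ ≤ dist p q := by
  have h : ∀ᶠ ρ in 𝓝[>] (0 : ℝ), ∀ p ∈ S, ∀ q ∈ S, p ≠ q → ρ ≤ dist p q := by
    simp only [Filter.eventually_all_finset, Filter.eventually_imp_distrib_left]
    exact fun p _ q _ hpq => nhdsWithin_le_nhds (eventually_le_nhds (dist_pos.2 hpq))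
  obtain ⟨ρ, hρ, hρpos⟩ := (h.and self_mem_nhdsWithin).exists
  exact ⟨ρ, hρpos, hρ⟩

lemma exists_nat_lt_add_mul_mem_Ioo {a σ ρ v B : ℝ} (hσ : 0 < σ) (hσρ : σ < ρ)
    (hav : a ≤ v) (hB : v - a ≤ B) :
    ∃ j : ℕ, j < ⌊B / σ⌋₊ + 2 ∧ a + j * σ ∈ Ioo v (v + ρ) := by
  set f := (v - a) / σ
  have hf : f * σ = v - a := div_mul_cancel₀ _ hσ.ne'
  have hfloor : (⌊f⌋₊ : ℝ) ≤ f := Nat.floor_le (div_nonneg (sub_nonneg.2 hav) hσ.le)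
  have hlt : f < ⌊f⌋₊ + 1 := Nat.lt_floor_add_one f
  refine ⟨⌊f⌋₊ + 1, ?_, ?_, ?_⟩
  · have : ⌊f⌋₊ ≤ ⌊B / σ⌋₊ := Nat.floor_le_floor (div_le_div_of_nonneg_right hB hσ.le)
    omega
  · push_cast; nlinarith
  · push_cast; nlinarith

theorem Irrational.exists_forall_exists_fract_add_mul_mem_Ioo {β ρ : ℝ} (hβ : Irrational β)
    (hρ : 0 < ρ) :
    ∃ M : ℕ, ∀ δ u : ℝ, 0 ≤ u → u + ρ ≤ 1 →
      ∃ m < M, Int.fract (δ + m * β) ∈ Ioo u (u + ρ) := by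
  obtain ⟨q, hq, -, hσρ⟩ := Real.exists_nat_abs_mul_sub_round_le β (Nat.ceil_pos.2 (inv_pos.2 hρ))
  set σ := q * β - round (q * β)
  have hσ : σ ≠ 0 := sub_ne_zero.2 ((hβ.natCast_mul hq.ne').ne_int _)
  replace hσρ : |σ| < ρ := hσρ.trans_lt <| by
    rw [one_div, inv_lt_comm₀ (by positivity) hρ]
    exact (Nat.le_ceil _).trans_lt (lt_add_one _)
  refine ⟨(⌊2 / |σ|⌋₊ + 2) * q, fun δ u hu huρ => ?_⟩
  have hδ := Int.fract_nonneg δ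
  have hδ1 := Int.fract_lt_one δ
  -- `q β` lies within `|σ| < ρ` of an integer, so along multiples of `q` the orbit moves by `σ`.
  have hfract : ∀ (j : ℕ) (c : ℤ), Int.fract δ + j * σ + c ∈ Ico 0 1 →
      Int.fract (δ + (j * q : ℕ) * β) = Int.fract δ + j * σ + c := fun j c hc =>
    Int.fract_eq_iff.2 ⟨hc.1, hc.2, ⌊δ⌋ + j * round (q * β) - c, by
      rw [Int.fract]; push_cast; ring⟩
  obtain ⟨j, hj, hmem⟩ : ∃ j : ℕ, j < ⌊2 / |σ|⌋₊ + 2 ∧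
      Int.fract (δ + (j * q : ℕ) * β) ∈ Ioo u (u + ρ) := by
    rcases hσ.lt_or_gt with hneg | hpos
    · rw [abs_of_neg hneg] at hσρ ⊢
      obtain ⟨j, hj, h1, h2⟩ := exists_nat_lt_add_mul_mem_Ioo (a := -Int.fract δ)
        (v := 1 - u - ρ) (B := 2) (neg_pos.2 hneg) hσρ (by linarith) (by linarith)
      refine ⟨j, hj, ?_⟩
      rw [hfract j 1 ⟨by push_cast; linarith, by push_cast; linarith⟩]
      constructor <;> push_cast <;> linarith
    · rw [abs_of_pos hpos] at hσρ ⊢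
      obtain ⟨j, hj, h1, h2⟩ := exists_nat_lt_add_mul_mem_Ioo (a := Int.fract δ)
        (v := u + 1) (B := 2) hpos hσρ (by linarith) (by linarith)
      refine ⟨j, hj, ?_⟩
      rw [hfract j (-1) ⟨by push_cast; linarith, by push_cast; linarith⟩]
      constructor <;> push_cast <;> linarith
  exact ⟨j * q, Nat.mul_lt_mul_of_pos_right hj hq, hmem⟩

lemma Irrational.injective_fract_neg_natCast_mul {α : ℝ} (hα : Irrational α) :
    Function.Injective fun t : ℕ => Int.fract (-(t * α)) := by
  intro t t' h
  obtain ⟨z, hz⟩ := Int.fract_eq_fract.1 h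
  by_contra hne
  have hne' : (t' : ℤ) - t ≠ 0 := sub_ne_zero.2 (by exact_mod_cast Ne.symm hne)
  exact (hα.intCast_mul hne').ne_int z (by push_cast; linarith)

/-- `{θ - A} < α` says that `θ` lies on the arc from `A` to `A + α` (mod 1); two points on the same
side of that arc have both of its endpoints, or neither, between them. -/
lemma mem_Ioc_iff_fract_add_mem_Ioc {α A θ θ' : ℝ} (hα0 : 0 < α) (hα1 : α < 1)
    (hA : A ∈ Ico 0 1) (hθ : θ ∈ Ico 0 1) (hθ' : θ' ∈ Ico 0 1)
    (h : Int.fract (θ - A) < α ↔ Int.fract (θ' - A) < α) :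
    A ∈ Ioc θ θ' ↔ Int.fract (A + α) ∈ Ioc θ θ' := by
  rw [Int.fract_sub_lt_iff_of_mem_Ico hθ hA, Int.fract_sub_lt_iff_of_mem_Ico hθ' hA] at h
  obtain ⟨hA0, hA1⟩ := hA
  rcases lt_or_ge (A + α) 1 with hlt | hge
  · rw [Int.fract_eq_self.2 ⟨by linarith, hlt⟩, mem_Ioc, mem_Ioc]
    grind
  · rw [← Int.fract_sub_one, Int.fract_eq_self.2 ⟨by linarith, by linarith⟩, mem_Ioc, mem_Ioc]
    grind

lemma notMem_Ioc_of_forall_fract_add_lt_iff {α θ θ' : ℝ} (hα0 : 0 < α) (hα1 : α < 1)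
    (hθ : θ ∈ Ico 0 1) (hθ' : θ' ∈ Ico 0 1) {n : ℕ}
    (h : ∀ s < n, (Int.fract (θ + s * α) < α ↔ Int.fract (θ' + s * α) < α)) :
    ∀ t < n, Int.fract (-(t * α)) ∉ Ioc θ θ' := by
  intro t
  induction t with
  | zero =>
    intro _ hmem
    rw [Nat.cast_zero, zero_mul, neg_zero, Int.fract_zero] at hmem
    exact hmem.1.not_ge hθ.1
  | succ t ih =>
    intro ht hmem
    have hstep := mem_Ioc_iff_fract_add_mem_Ioc (A := Int.fract (-((t + 1 : ℕ) * α))) hα0 hα1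
      ⟨Int.fract_nonneg _, Int.fract_lt_one _⟩ hθ hθ'
      (by simpa only [Int.fract_sub_fract, sub_neg_eq_add] using h (t + 1) ht)
    have hA : Int.fract (Int.fract (-((t + 1 : ℕ) * α)) + α) = Int.fract (-(t * α)) := by
      rw [Int.fract_fract_add]; push_cast; ring_nf
    exact ih (by omega) (hA ▸ hstep.1 hmem)

lemma charSturmian_add (α : ℝ) (q s : ℕ) :
    charSturmian α (q + s) =
      if Int.fract (Int.fract ((q + 1) * α) + s * α) < α then 1 else 0 := by
  rw [charSturmian, Int.fract_fract_add]
  push_cast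
  ring_nf

lemma charSturmian_factors_ne {α : ℝ} (hα0 : 0 < α) (hα1 : α < 1) {n q q' t : ℕ} (ht : t < n)
    (hmem : Int.fract (-(t * α)) ∈ Ioc (Int.fract ((q + 1) * α)) (Int.fract ((q' + 1) * α))) :
    (fun s : Fin n => charSturmian α (q + s)) ≠ fun s : Fin n => charSturmian α (q' + s) := by
  intro h
  refine notMem_Ioc_of_forall_fract_add_lt_iff hα0 hα1 ⟨Int.fract_nonneg _, Int.fract_lt_one _⟩
    ⟨Int.fract_nonneg _, Int.fract_lt_one _⟩ (fun s hs => ?_) t ht hmem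
  simpa [charSturmian_add] using congrArg (· = 1) (congrFun h ⟨s, hs⟩)

theorem exists_forall_le_card_charSturmian_factors {α : ℝ} (hα : Irrational α) (hα0 : 0 < α)
    (hα1 : α < 1) {d : ℕ} (hd : 0 < d) (n : ℕ) :
    ∃ M, ∀ P, n ≤ ((Finset.range M).image
      fun m (s : Fin n) => charSturmian α (P + m * d + s)).card + 1 := by
  classical
  set S := (Finset.range n).image fun t : ℕ => Int.fract (-(t * α))
  obtain ⟨ρ, hρ, hsep⟩ := S.exists_pos_le_dist
  obtain ⟨M, hM⟩ := (hα.natCast_mul hd.ne').exists_forall_exists_fract_add_mul_mem_Ioo hρ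
  refine ⟨M, fun P => ?_⟩
  set θ : ℕ → ℝ := fun m => Int.fract (((P + m * d : ℕ) + 1) * α)
  have hvisit : ∀ p ∈ S.erase 0, ∃ m < M, θ m ∈ Ioo (p - ρ) p := by
    intro p hp
    obtain ⟨hp0, hpS⟩ := Finset.mem_erase.1 hp
    obtain ⟨t, ht, rfl⟩ := Finset.mem_image.1 hpS
    have h0S : (0 : ℝ) ∈ S := Finset.mem_image.2 ⟨0, by simp at ht ⊢; omega, by simp⟩
    have hρp : ρ ≤ Int.fract (-(t * α)) := by
      simpa [Real.dist_eq, abs_of_nonneg (Int.fract_nonneg (-(t * α)))] using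
        hsep _ hpS 0 h0S hp0
    obtain ⟨m, hm, hmem⟩ := hM ((P + 1) * α) (Int.fract (-(t * α)) - ρ) (by linarith)
      (by linarith [Int.fract_lt_one (-(t * α))])
    refine ⟨m, hm, ?_⟩
    simp only [θ, sub_add_cancel] at hmem ⊢
    convert hmem using 2
    push_cast; ring
  choose! mp hmpM hmp using hvisit
  have hinj : Set.InjOn (fun p => fun s : Fin n => charSturmian α (P + mp p * d + s))
      ↑(S.erase 0) := by
    intro p hp p' hp' hw
    by_contra hne
    wlog hlt : p < p' generalizing p p'
    · exact this hp' hp hw.symm (Ne.symm hne) (lt_of_le_of_ne (not_lt.1 hlt) (Ne.symm hne))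
    have hgap : ρ ≤ p' - p := by
      simpa [Real.dist_eq, abs_of_pos (sub_pos.2 hlt)] using
        hsep p' (Finset.mem_of_mem_erase hp') p (Finset.mem_of_mem_erase hp) (Ne.symm hne)
    obtain ⟨t, ht, rfl⟩ := Finset.mem_image.1 (Finset.mem_of_mem_erase hp)
    refine charSturmian_factors_ne hα0 hα1 (Finset.mem_range.1 ht) ⟨(hmp _ hp).2, ?_⟩ hw
    linarith [(hmp _ hp').1]
  have hS : S.card = n := by
    rw [Finset.card_image_of_injective _ hα.injective_fract_neg_natCast_mul, Finset.card_range]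
  calc n ≤ (S.erase 0).card + 1 := by
        have := Finset.pred_card_le_card_erase (s := S) (a := 0)
        omega
    _ ≤ _ := by
      gcongr
      refine Finset.card_le_card_of_injOn _ (fun p hp => ?_) hinj
      exact Finset.mem_image_of_mem _ (Finset.mem_range.2 (hmpM p hp))

theorem exists_forall_encard_range_blocks_le {A : Type*} {k : ℕ} {x : ℕ → A}
    (hfin : (Set.range x).Finite) (hkernel : (kKernel k x).Finite) :
    ∃ D : ℕ, ∀ r, (Set.range fun (b : ℕ) (s : Fin (k ^ r)) => x (b * k ^ r + s)).encard ≤ D := by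
  have : Finite (kKernel k x) := hkernel.to_subtype
  set Φ : ℕ → kKernel k x → A := fun b g => g.1 b
  have hΦ : (Set.range Φ).Finite := by
    refine (Set.Finite.pi fun _ => hfin).subset ?_
    rintro _ ⟨b, rfl⟩ ⟨g, r, s, -, rfl⟩ -
    exact ⟨b * k ^ r + s, rfl⟩
  refine ⟨(Set.range Φ).ncard, fun r => ?_⟩
  rw [hΦ.cast_ncard_eq]
  have hblock : (fun (b : ℕ) (s : Fin (k ^ r)) => x (b * k ^ r + s)) =
      (fun φ (s : Fin (k ^ r)) => φ ⟨fun n => x (n * k ^ r + s), r, s, s.2, rfl⟩) ∘ Φ := rfl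
  rw [hblock, Set.range_comp]
  exact Set.encard_image_le _ _

lemma exists_aligned_blocks_of_common_factor {A : Type*} {x y : ℕ → A} {n M L i j : ℕ}
    (hL : (M + 2) * n ≤ L) (h : ∀ t < L, x (i + t) = y (j + t)) :
    ∃ b P, ∀ m < M, ∀ s < n, x ((b + m) * n + s) = y (P + m * n + s) := by
  rcases Nat.eq_zero_or_pos n with rfl | hn
  · exact ⟨0, 0, fun _ _ s hs => absurd hs (Nat.not_lt_zero s)⟩
  have hoff : i + (n - i % n) = (i / n + 1) * n := by
    have := Nat.div_add_mod' i n
    have := Nat.mod_lt i hn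
    rw [add_mul, one_mul]
    omega
  refine ⟨i / n + 1, j + (n - i % n), fun m hm s hs => ?_⟩
  have hMn : (m + 1) * n + n ≤ (M + 2) * n := by nlinarith
  have hLt : n - i % n + m * n + s < L := by
    rw [add_mul, one_mul] at hMn
    omega
  rw [add_mul, ← hoff]
  simpa only [add_assoc] using h _ hLt

/-- **Main theorem (characteristic Sturmian version).**
Let `k ≥ 2`, let `x : ℕ → ℕ` be a sequence over a finite alphabet whose
`k`-kernel is finite, let `α` be irrational with `0 < α < 1`, and let
`a n = 1` if `{(n+1)α} < α` and `a n = 0` otherwise (the characteristic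
Sturmian sequence of slope `α`).  Then there is a constant `C` such that any
common factor of `x` and `a` has length at most `C`. -/
theorem automatic_characteristic_sturmian_common_factor_bounded
    (k : ℕ) (hk : 2 ≤ k)
    (x : ℕ → ℕ) (hfin : (Set.range x).Finite)
    (hkernel : {g : ℕ → ℕ | ∃ r s : ℕ, s < k ^ r ∧
        g = fun n => x (n * k ^ r + s)}.Finite)
    (α : ℝ) (hα : Irrational α) (hα0 : 0 < α) (hα1 : α < 1)
    (a : ℕ → ℕ)
    (ha : ∀ n : ℕ, a n = if Int.fract (((n : ℝ) + 1) * α) < α then 1 else 0) :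
    ∃ C : ℕ, ∀ (L i j : ℕ), (∀ t < L, x (i + t) = a (j + t)) → L ≤ C := by
  obtain rfl : a = charSturmian α := funext ha
  obtain ⟨D, hD⟩ := exists_forall_encard_range_blocks_le (k := k) hfin hkernel
  set n := k ^ (D + 2)
  have hDn : D + 2 < n := Nat.lt_two_pow_self.trans_le (Nat.pow_le_pow_left hk _)
  obtain ⟨M, hM⟩ := exists_forall_le_card_charSturmian_factors hα hα0 hα1 (d := n) (by omega) n
  refine ⟨(M + 2) * n, fun L i j h => ?_⟩
  by_contra! hL
  obtain ⟨b, P, hbP⟩ := exists_aligned_blocks_of_common_factor hL.le h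
  have hsub : ↑((Finset.range M).image fun m (s : Fin n) => charSturmian α (P + m * n + s)) ⊆
      Set.range fun b (s : Fin n) => x (b * n + s) := by
    intro w hw
    obtain ⟨m, hm, rfl⟩ := Finset.mem_image.1 hw
    exact ⟨b + m, funext fun s => hbP m (Finset.mem_range.1 hm) s s.2⟩
  have hcard := (Set.encard_le_encard hsub).trans (hD (D + 2))
  rw [Set.encard_coe_eq_coe_finsetCard, Nat.cast_le] at hcard
  have := hM P
  omega
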